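/- arXiv:2410.19685 — 7 statements merged into one kernel-verified Lean document; each statement's English description precedes it below -/
import Mathlib

section
/- In any memoryless silence opinion model (SOM^-), there exist real numbers U, L ∈ [0,1] such that lim_{t→∞} max_i(B_i^t) = U and lim_{t→∞} min_i(B_i^t) = L. -/
open Finset Filter Topology

noncomputable section

/-- The set of neighbors (contacts) of agent `i`: agents `j ≠ i` with an edge `(j,i)` to `i`,
where the edge relation is `(j,i) ∈ E ↔ I j i ≠ 0`. -/
def nbrs {n : ℕ} (I : Fin n → Fin n → ℝ) (i : Fin n) : Finset (Fin n) :=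
  Finset.univ.filter (fun j => j ≠ i ∧ I j i ≠ 0)

/-- Maximum opinion value in an opinion state. -/
def maxOp {n : ℕ} (hn : 0 < n) (b : Fin n → ℝ) : ℝ :=
  Finset.univ.sup' ⟨⟨0, hn⟩, Finset.mem_univ _⟩ b

/-- Minimum opinion value in an opinion state. -/
def minOp {n : ℕ} (hn : 0 < n) (b : Fin n → ℝ) : ℝ :=
  Finset.univ.inf' ⟨⟨0, hn⟩, Finset.mem_univ _⟩ b

/-- The influence graph is a clique: every pair of distinct agents is connected. -/
def IsClique {n : ℕ} (I : Fin n → Fin n → ℝ) : Prop :=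
  ∀ i j : Fin n, i ≠ j → I i j ≠ 0

/-- A memoryless silence opinion model (SOM⁻) on `n` agents. The edge set is the
support of `I` (so `I i j = 0 ↔ (i,j) ∉ E`). `s t i = 1` means agent `i` is
non-silent at time `t`, `s t i = 0` means silent. -/
structure SOMminus (n : ℕ) where
  /-- influence weights -/
  I : Fin n → Fin n → ℝ
  I_nonneg : ∀ i j, 0 ≤ I i j
  I_le_one : ∀ i j, I i j ≤ 1
  /-- total influence on each agent (from neighbors and itself) is 1 -/
  sum_one : ∀ i, ∑ j ∈ insert i (nbrs I i), I j i = 1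
  /-- tolerance radii -/
  τ : Fin n → ℝ
  τ_mem : ∀ i, τ i ∈ Set.Icc (0:ℝ) 1
  /-- opinion states -/
  B : ℕ → Fin n → ℝ
  /-- silence states -/
  s : ℕ → Fin n → ℝ
  B0_mem : ∀ i, B 0 i ∈ Set.Icc (0:ℝ) 1
  s_bool : ∀ t i, s t i = 0 ∨ s t i = 1
  /-- memoryless opinion update -/
  B_upd : ∀ t i, B (t+1) i =
    B t i + ∑ j ∈ nbrs I i, I j i * s t j * (B t j - B t i)
  /-- silence update: non-silent iff at least ⌈|N_i^t|/2⌉ non-silent neighbors are within tolerance -/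
  s_upd : ∀ t i, (s (t+1) i = 1 ↔
    (((nbrs I i).filter (fun j => s t j = 1)).card + 1) / 2 ≤
      (((nbrs I i).filter (fun j => s t j = 1)).filter
        (fun j => |B t i - B t j| ≤ τ i)).card)

lemma SOMminus.csum {n : ℕ} (M : SOMminus n) (t : ℕ) (i : Fin n) :
    (0 ≤ ∑ j ∈ nbrs M.I i, M.I j i * M.s t j) ∧
    (∑ j ∈ nbrs M.I i, M.I j i * M.s t j ≤ 1) := by
  have hs : ∀ j, 0 ≤ M.s t j ∧ M.s t j ≤ 1 := by
    intro j; rcases M.s_bool t j with h | h <;> simp [h]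
  constructor
  · exact Finset.sum_nonneg fun j _ => mul_nonneg (M.I_nonneg j i) (hs j).1
  · have h1 : ∑ j ∈ nbrs M.I i, M.I j i * M.s t j ≤ ∑ j ∈ nbrs M.I i, M.I j i := by
      refine Finset.sum_le_sum fun j _ => ?_
      nlinarith [(hs j).2, M.I_nonneg j i]
    have hi : i ∉ nbrs M.I i := by simp [nbrs]
    have h2 := M.sum_one i
    rw [Finset.sum_insert hi] at h2
    nlinarith [M.I_nonneg i i]

lemma SOMminus.step_le_max {n : ℕ} (hn : 0 < n) (M : SOMminus n) (t : ℕ) (i : Fin n) :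
    M.B (t+1) i ≤ maxOp hn (M.B t) := by
  have hle : ∀ j, M.B t j ≤ maxOp hn (M.B t) :=
    fun j => Finset.le_sup' _ (Finset.mem_univ j)
  have hs : ∀ j, 0 ≤ M.s t j ∧ M.s t j ≤ 1 := by
    intro j; rcases M.s_bool t j with h | h <;> simp [h]
  obtain ⟨hc0, hc1⟩ := M.csum t i
  rw [M.B_upd]
  have h1 : ∑ j ∈ nbrs M.I i, M.I j i * M.s t j * (M.B t j - M.B t i)
      ≤ ∑ j ∈ nbrs M.I i, M.I j i * M.s t j * (maxOp hn (M.B t) - M.B t i) := by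
    refine Finset.sum_le_sum fun j _ => ?_
    exact mul_le_mul_of_nonneg_left (by linarith [hle j])
      (mul_nonneg (M.I_nonneg j i) (hs j).1)
  rw [← Finset.sum_mul] at h1
  nlinarith [hle i]

lemma SOMminus.min_le_step {n : ℕ} (hn : 0 < n) (M : SOMminus n) (t : ℕ) (i : Fin n) :
    minOp hn (M.B t) ≤ M.B (t+1) i := by
  have hle : ∀ j, minOp hn (M.B t) ≤ M.B t j :=
    fun j => Finset.inf'_le _ (Finset.mem_univ j)
  have hs : ∀ j, 0 ≤ M.s t j ∧ M.s t j ≤ 1 := by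
    intro j; rcases M.s_bool t j with h | h <;> simp [h]
  obtain ⟨hc0, hc1⟩ := M.csum t i
  rw [M.B_upd]
  have h1 : ∑ j ∈ nbrs M.I i, M.I j i * M.s t j * (minOp hn (M.B t) - M.B t i)
      ≤ ∑ j ∈ nbrs M.I i, M.I j i * M.s t j * (M.B t j - M.B t i) := by
    refine Finset.sum_le_sum fun j _ => ?_
    exact mul_le_mul_of_nonneg_left (by linarith [hle j])
      (mul_nonneg (M.I_nonneg j i) (hs j).1)
  rw [← Finset.sum_mul] at h1
  nlinarith [hle i]

/-- In any SOM⁻ model, there exist `U, L ∈ [0,1]` such that the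
maximum opinion converges to `U` and the minimum opinion converges to `L`. -/
theorem stmt_4 {n : ℕ} (hn : 0 < n) (M : SOMminus n) :
    ∃ U L : ℝ, U ∈ Set.Icc (0:ℝ) 1 ∧ L ∈ Set.Icc (0:ℝ) 1 ∧
      Tendsto (fun t => maxOp hn (M.B t)) atTop (𝓝 U) ∧
      Tendsto (fun t => minOp hn (M.B t)) atTop (𝓝 L) := by
  set f : ℕ → ℝ := fun t => maxOp hn (M.B t) with hf
  set g : ℕ → ℝ := fun t => minOp hn (M.B t) with hg
  have hfstep : ∀ t, f (t+1) ≤ f t := by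
    intro t
    exact Finset.sup'_le _ _ fun i _ => M.step_le_max hn t i
  have hgstep : ∀ t, g t ≤ g (t+1) := by
    intro t
    exact Finset.le_inf' _ _ fun i _ => M.min_le_step hn t i
  have hfanti : Antitone f := antitone_nat_of_succ_le hfstep
  have hgmono : Monotone g := monotone_nat_of_le_succ hgstep
  have hgf : ∀ t, g t ≤ f t := by
    intro t
    exact le_trans (Finset.inf'_le _ (Finset.mem_univ (⟨0, hn⟩ : Fin n)))
      (Finset.le_sup' _ (Finset.mem_univ (⟨0, hn⟩ : Fin n)))
  have hf0 : f 0 ≤ 1 := Finset.sup'_le _ _ fun i _ => (M.B0_mem i).2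
  have hg0 : 0 ≤ g 0 := Finset.le_inf' _ _ fun i _ => (M.B0_mem i).1
  have hfl : ∀ t, 0 ≤ f t := fun t => le_trans (le_trans hg0 (hgmono (Nat.zero_le t))) (hgf t)
  have hgu : ∀ t, g t ≤ 1 := fun t => le_trans (hgf t) (le_trans (hfanti (Nat.zero_le t)) hf0)
  have hfb : BddBelow (Set.range f) := ⟨0, by rintro x ⟨t, rfl⟩; exact hfl t⟩
  have hgb : BddAbove (Set.range g) := ⟨1, by rintro x ⟨t, rfl⟩; exact hgu t⟩
  refine ⟨⨅ t, f t, ⨆ t, g t, ⟨le_ciInf hfl, le_trans (ciInf_le hfb 0) hf0⟩,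
    ⟨le_trans hg0 (le_ciSup hgb 0), ciSup_le hgu⟩,
    tendsto_atTop_ciInf hfanti hfb, tendsto_atTop_ciSup hgmono hgb⟩
end
end

section
/- In any memoryless silence opinion model (SOM^-) whose influence graph is a clique, letting U = lim_{t→∞} max_i(B_i^t), for every time t ∈ ℕ there exist k ∈ ℕ and an agent i ∈ A such that B_i^{t+k} ≥ U and s_i^{t+k} = 1 (i.e., from any time onwards, some agent with opinion at least U eventually speaks). -/
open Finset Filter Topology

noncomputable section

lemma w_sum_le_one {n : ℕ} (M : SOMminus n) (m : ℕ) (i : Fin n) :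
    ∑ j ∈ nbrs M.I i, M.I j i * M.s m j ≤ 1 := by
  have hni : i ∉ nbrs M.I i := by simp [nbrs]
  have h1 : M.I i i + ∑ j ∈ nbrs M.I i, M.I j i = 1 := by
    have := M.sum_one i
    rwa [Finset.sum_insert hni] at this
  have h2 : ∑ j ∈ nbrs M.I i, M.I j i * M.s m j ≤ ∑ j ∈ nbrs M.I i, M.I j i := by
    apply Finset.sum_le_sum
    intro j _
    rcases M.s_bool m j with h | h <;> simp [h, M.I_nonneg j i]
  have := M.I_nonneg i i
  linarith

lemma w_term_nonneg {n : ℕ} (M : SOMminus n) (m : ℕ) (i j : Fin n) :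
    0 ≤ M.I j i * M.s m j := by
  apply mul_nonneg (M.I_nonneg j i)
  rcases M.s_bool m j with h | h <;> simp [h]

/-- Core convexity bound. -/
lemma step_le {n : ℕ} (M : SOMminus n) (m : ℕ) (i : Fin n) (Mv : ℝ)
    (hi : M.B m i ≤ Mv) (hns : ∀ j, M.s m j = 1 → M.B m j ≤ Mv) :
    M.B (m+1) i ≤ Mv := by
  rw [M.B_upd m i]
  have hterm : ∀ j ∈ nbrs M.I i,
      M.I j i * M.s m j * (M.B m j - M.B m i) ≤ M.I j i * M.s m j * (Mv - M.B m i) := by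
    intro j _
    rcases M.s_bool m j with h | h
    · simp [h]
    · exact mul_le_mul_of_nonneg_left (by linarith [hns j h]) (w_term_nonneg M m i j)
  have hsum : ∑ j ∈ nbrs M.I i, M.I j i * M.s m j * (M.B m j - M.B m i)
      ≤ (∑ j ∈ nbrs M.I i, M.I j i * M.s m j) * (Mv - M.B m i) := by
    rw [Finset.sum_mul]
    exact Finset.sum_le_sum hterm
  have hW1 := w_sum_le_one M m i
  have hW0 : 0 ≤ ∑ j ∈ nbrs M.I i, M.I j i * M.s m j :=
    Finset.sum_nonneg fun j _ => w_term_nonneg M m i j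
  nlinarith [hsum]

lemma maxOp_anti {n : ℕ} (hn : 0 < n) (M : SOMminus n) :
    Antitone (fun m => maxOp hn (M.B m)) := by
  apply antitone_nat_of_succ_le
  intro m
  apply Finset.sup'_le
  intro i _
  exact step_le M m i _ (Finset.le_sup' _ (Finset.mem_univ i))
    (fun j _ => Finset.le_sup' _ (Finset.mem_univ j))

/-- In any SOM⁻ model on a clique, with `U` the limit of the maximum
opinion, from any time `t` onwards some agent with opinion at least `U` eventually
speaks: there exist `k` and `i` with `B i (t+k) ≥ U` and `s i (t+k) = 1`. -/
theorem stmt_7 {n : ℕ} (hn : 0 < n) (M : SOMminus n) (hclique : IsClique M.I)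
    (U : ℝ) (hU : Tendsto (fun t => maxOp hn (M.B t)) atTop (𝓝 U)) (t : ℕ) :
    ∃ (k : ℕ) (i : Fin n), U ≤ M.B (t+k) i ∧ M.s (t+k) i = 1 := by
  classical
  by_contra hcon
  push_neg at hcon
  -- U is a lower bound on maxOp at every time
  have hUle : ∀ m, U ≤ maxOp hn (M.B m) := by
    intro m
    apply le_of_tendsto hU
    filter_upwards [eventually_ge_atTop m] with k hk
    exact maxOp_anti hn M hk
  -- argmax agent exists
  have hargmax : ∀ m, ∃ i, maxOp hn (M.B m) = M.B m i := by
    intro m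
    obtain ⟨i, _, hi⟩ := Finset.exists_mem_eq_sup' (⟨⟨0, hn⟩, Finset.mem_univ _⟩ :
      (Finset.univ : Finset (Fin n)).Nonempty) (M.B m)
    exact ⟨i, hi⟩
  -- reformulated contradiction hypothesis
  have H : ∀ m, t ≤ m → ∀ i, M.s m i = 1 → M.B m i < U := by
    intro m hm i hsi
    by_contra hge
    have h := hcon (m - t) i
    rw [Nat.add_sub_cancel' hm] at h
    exact (h (le_of_not_gt hge)) hsi
  -- Step A: at each time ≥ t, someone is non-silent
  have hA : ∀ m, t ≤ m → ∃ j, M.s m j = 1 := by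
    intro m hm
    by_contra h0
    push_neg at h0
    have hall : ∀ i : Fin n, M.s (m+1) i = 1 := by
      intro i
      rw [M.s_upd m i]
      have : (nbrs M.I i).filter (fun j => M.s m j = 1) = ∅ := by
        apply Finset.filter_false_of_mem
        intro j _
        exact h0 j
      simp [this]
    obtain ⟨i₁, hi₁⟩ := hargmax (m+1)
    have hlt := H (m+1) (by omega) i₁ (hall i₁)
    have := hUle (m+1)
    rw [hi₁] at this
    linarith
  -- below-U is absorbing (from time t on)
  have hdropstep : ∀ m, t ≤ m → ∀ i, M.B m i < U → M.B (m+1) i < U := by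
    intro m hm i hlt
    set T : Finset (Fin n) := insert i (Finset.univ.filter (fun j => M.s m j = 1)) with hT
    have hTne : T.Nonempty := ⟨i, Finset.mem_insert_self _ _⟩
    have hle : M.B (m+1) i ≤ T.sup' hTne (M.B m) := by
      apply step_le M m i
      · exact Finset.le_sup' _ (Finset.mem_insert_self _ _)
      · intro j hj
        exact Finset.le_sup' _ (Finset.mem_insert_of_mem (by simp [hj]))
    have hsup : T.sup' hTne (M.B m) < U := by
      rw [Finset.sup'_lt_iff]
      intro j hj
      rcases Finset.mem_insert.1 hj with rfl | hj'
      · exact hlt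
      · exact H m hm j (Finset.mem_filter.1 hj').2
    linarith
  have hdrop : ∀ i a b, t ≤ a → a ≤ b → M.B a i < U → M.B b i < U := by
    intro i a b ha hab hlt
    induction b, hab using Nat.le_induction with
    | base => exact hlt
    | succ m hm ih => exact hdropstep m (le_trans ha hm) i ih
  -- choose drop witnesses
  have hwit : ∀ j : Fin n, ∃ mj, t ≤ mj ∧
      ((¬ ∀ m, t ≤ m → U ≤ M.B m j) → M.B mj j < U) := by
    intro j
    by_cases h : ∀ m, t ≤ m → U ≤ M.B m j
    · exact ⟨t, le_refl t, fun hc => absurd h hc⟩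
    · push_neg at h
      obtain ⟨m, hm, hlt⟩ := h
      exact ⟨m, hm, fun _ => hlt⟩
  choose mj hmj1 hmj2 using hwit
  set k₀ : ℕ := max t (Finset.univ.sup mj) with hk₀def
  have hk₀t : t ≤ k₀ := le_max_left _ _
  have hdropk₀ : ∀ j, (¬ ∀ m, t ≤ m → U ≤ M.B m j) → M.B k₀ j < U := by
    intro j hj
    exact hdrop j (mj j) k₀ (hmj1 j)
      (le_trans (Finset.le_sup (Finset.mem_univ j)) (le_max_right _ _)) (hmj2 j hj)
  -- S nonempty: some agent stays ≥ U forever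
  have hS : ∃ i, ∀ m, t ≤ m → U ≤ M.B m i := by
    by_contra hno
    push_neg at hno
    obtain ⟨i₁, hi₁⟩ := hargmax k₀
    have h1 : M.B k₀ i₁ < U := by
      apply hdropk₀
      intro hall
      obtain ⟨m, hm, hlt⟩ := hno i₁
      exact absurd (hall m hm) (not_le.2 hlt)
    have := hUle k₀
    rw [hi₁] at this
    linarith
  obtain ⟨istar, histar⟩ := hS
  -- a non-silent, below-U agent at time k₀
  obtain ⟨j₀, hj₀⟩ := hA k₀ hk₀t
  have hj₀lt : M.B k₀ j₀ < U := H k₀ hk₀t j₀ hj₀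
  have hj₀ne : j₀ ≠ istar := by
    intro h; rw [h] at hj₀lt; exact absurd (histar k₀ hk₀t) (not_le.2 hj₀lt)
  have hj₀notS : ¬ ∀ m, t ≤ m → U ≤ M.B m j₀ := by
    intro h; exact absurd (h k₀ hk₀t) (not_le.2 hj₀lt)
  -- μ : eventual uniform bound on non-S agents
  set Sc : Finset (Fin n) := Finset.univ.filter (fun j => ¬ ∀ m, t ≤ m → U ≤ M.B m j)
    with hScdef
  have hScne : Sc.Nonempty := ⟨j₀, Finset.mem_filter.2 ⟨Finset.mem_univ _, hj₀notS⟩⟩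
  set μ : ℝ := Sc.sup' hScne (M.B k₀) with hμdef
  have hμU : μ < U := by
    rw [hμdef, Finset.sup'_lt_iff]
    intro j hj
    exact hdropk₀ j (Finset.mem_filter.1 hj).2
  -- invariant: non-S agents stay ≤ μ from time k₀
  have hinv : ∀ m, k₀ ≤ m → ∀ j, (¬ ∀ m', t ≤ m' → U ≤ M.B m' j) → M.B m j ≤ μ := by
    intro m hm
    induction m, hm using Nat.le_induction with
    | base => intro j hj; exact Finset.le_sup' (M.B k₀) (Finset.mem_filter.2 ⟨Finset.mem_univ _, hj⟩)
    | succ m hm ih =>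
      intro j hj
      apply step_le M m j μ (ih j hj)
      intro l hl
      apply ih l
      intro hall
      have := H m (le_trans hk₀t hm) l hl
      exact absurd (hall m (le_trans hk₀t hm)) (not_le.2 this)
  -- minimal weight into istar
  have hj₀nbr : j₀ ∈ nbrs M.I istar := by
    simp only [nbrs, Finset.mem_filter, Finset.mem_univ, true_and]
    exact ⟨hj₀ne, hclique j₀ istar hj₀ne⟩
  have hnbrne : (nbrs M.I istar).Nonempty := ⟨j₀, hj₀nbr⟩
  set c : ℝ := (nbrs M.I istar).inf' hnbrne (fun j => M.I j istar) with hcdef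
  have hcpos : 0 < c := by
    rw [hcdef, Finset.lt_inf'_iff]
    intro j hj
    have := (Finset.mem_filter.1 hj).2.2
    exact lt_of_le_of_ne (M.I_nonneg j istar) (Ne.symm this)
  have hcle : c ≤ 1 :=
    le_trans (Finset.inf'_le _ hj₀nbr) (M.I_le_one j₀ istar)
  -- geometric decay of B istar towards μ
  have hdecay : ∀ m, k₀ ≤ m → M.B (m+1) istar - μ ≤ (1-c) * (M.B m istar - μ) := by
    intro m hm
    obtain ⟨j, hj⟩ := hA m (le_trans hk₀t hm)
    have hjlt : M.B m j < U := H m (le_trans hk₀t hm) j hj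
    have hBistar : U ≤ M.B m istar := histar m (le_trans hk₀t hm)
    have hjne : j ≠ istar := by
      intro h; rw [h] at hjlt; linarith
    have hjnbr : j ∈ nbrs M.I istar := by
      simp only [nbrs, Finset.mem_filter, Finset.mem_univ, true_and]
      exact ⟨hjne, hclique j istar hjne⟩
    have hjnotS : ¬ ∀ m', t ≤ m' → U ≤ M.B m' j := by
      intro h; exact absurd (h m (le_trans hk₀t hm)) (not_le.2 hjlt)
    have hjμ : M.B m j ≤ μ := hinv m hm j hjnotS
    rw [M.B_upd m istar]
    rw [← Finset.add_sum_erase _ _ hjnbr]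
    have hrest : ∑ l ∈ (nbrs M.I istar).erase j,
        M.I l istar * M.s m l * (M.B m l - M.B m istar) ≤ 0 := by
      apply Finset.sum_nonpos
      intro l hl
      rcases M.s_bool m l with h | h
      · simp [h]
      · have hllt : M.B m l < U := H m (le_trans hk₀t hm) l h
        apply mul_nonpos_of_nonneg_of_nonpos (w_term_nonneg M m istar l)
        linarith
    have hmain : M.I j istar * M.s m j * (M.B m j - M.B m istar)
        ≤ c * (μ - M.B m istar) := by
      rw [hj, mul_one]
      have hx : M.B m j - M.B m istar ≤ μ - M.B m istar := by linarith
      have hc' : c ≤ M.I j istar := Finset.inf'_le _ hjnbr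
      calc M.I j istar * (M.B m j - M.B m istar)
          ≤ M.I j istar * (μ - M.B m istar) :=
            mul_le_mul_of_nonneg_left hx (M.I_nonneg j istar)
        _ ≤ c * (μ - M.B m istar) :=
            mul_le_mul_of_nonpos_right hc' (by linarith)
    nlinarith [hrest, hmain]
  have hiter : ∀ p : ℕ, M.B (k₀ + p) istar - μ ≤ (1-c)^p * (M.B k₀ istar - μ) := by
    intro p
    induction p with
    | zero => simp
    | succ p ih =>
      have h1 := hdecay (k₀ + p) (Nat.le_add_right _ _)
      have h2 : (1-c) * (M.B (k₀+p) istar - μ) ≤ (1-c) * ((1-c)^p * (M.B k₀ istar - μ)) :=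
        mul_le_mul_of_nonneg_left ih (by linarith)
      calc M.B (k₀ + (p+1)) istar - μ = M.B ((k₀ + p) + 1) istar - μ := by ring_nf
        _ ≤ (1-c) * (M.B (k₀+p) istar - μ) := h1
        _ ≤ (1-c) * ((1-c)^p * (M.B k₀ istar - μ)) := h2
        _ = (1-c)^(p+1) * (M.B k₀ istar - μ) := by ring
  -- conclude
  have hD : 0 < M.B k₀ istar - μ := by
    have := histar k₀ hk₀t
    linarith
  obtain ⟨p, hp⟩ := exists_pow_lt_of_lt_one
    (div_pos (show (0:ℝ) < U - μ by linarith) hD)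
    (show (1:ℝ) - c < 1 by linarith)
  have hfin : M.B (k₀ + p) istar < U := by
    have h1 := hiter p
    have h2 : (1-c)^p * (M.B k₀ istar - μ) < U - μ := (lt_div_iff₀ hD).mp hp
    linarith
  exact absurd (histar (k₀ + p) (le_trans hk₀t (Nat.le_add_right _ _))) (not_le.2 hfin)
end
end

section
/- In any memoryless silence opinion model (SOM^-) whose influence graph is a clique with n ≥ 3 agents, if at time t there is a non-silent agent i (s_i^t = 1) with opinion B_i^t ≥ U, where U = lim_{t→∞} max_j(B_j^t), then the spread decreases by at least a fixed amount: R_{t+1} ≤ R_t − I_min·(U − L), where R_t = max_j(B_j^t) − min_j(B_j^t), I_min = min_{(i,j) ∈ E} I(i,j), and L = lim_{t→∞} min_j(B_j^t). -/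
open Finset Filter Topology

noncomputable section

section Aux

variable {n : ℕ} (M : SOMminus n)

/-- total non-silent incoming weight at time `t` for agent `k` -/
def Wt {n : ℕ} (M : SOMminus n) (t : ℕ) (k : Fin n) : ℝ :=
  ∑ j ∈ nbrs M.I k, M.I j k * M.s t j

lemma s_nonneg (t : ℕ) (j : Fin n) : 0 ≤ M.s t j := by
  rcases M.s_bool t j with h | h <;> simp [h]

lemma s_le_one (t : ℕ) (j : Fin n) : M.s t j ≤ 1 := by
  rcases M.s_bool t j with h | h <;> simp [h]

lemma self_notMem_nbrs (k : Fin n) : k ∉ nbrs M.I k := by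
  simp [nbrs]

lemma sum_nbrs (k : Fin n) : ∑ j ∈ nbrs M.I k, M.I j k = 1 - M.I k k := by
  have h := M.sum_one k
  rw [Finset.sum_insert (self_notMem_nbrs M k)] at h
  linarith

lemma term_nonneg (t : ℕ) (j k : Fin n) : 0 ≤ M.I j k * M.s t j :=
  mul_nonneg (M.I_nonneg j k) (s_nonneg M t j)

lemma Wt_nonneg (t : ℕ) (k : Fin n) : 0 ≤ Wt M t k :=
  Finset.sum_nonneg fun j _ => term_nonneg M t j k

lemma Wt_le_one (t : ℕ) (k : Fin n) : Wt M t k ≤ 1 := by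
  have h1 : Wt M t k ≤ ∑ j ∈ nbrs M.I k, M.I j k :=
    Finset.sum_le_sum fun j _ => by
      have := s_le_one M t j
      nlinarith [M.I_nonneg j k]
  rw [sum_nbrs] at h1
  have := M.I_nonneg k k
  linarith

lemma expand (t : ℕ) (k : Fin n) (c : ℝ) :
    M.B (t+1) k - c = (1 - Wt M t k) * (M.B t k - c)
      + ∑ j ∈ nbrs M.I k, (M.I j k * M.s t j) * (M.B t j - c) := by
  rw [M.B_upd t k]
  have h1 : ∑ j ∈ nbrs M.I k, M.I j k * M.s t j * (M.B t j - M.B t k)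
      = (∑ j ∈ nbrs M.I k, (M.I j k * M.s t j) * M.B t j) - Wt M t k * M.B t k := by
    rw [Wt, Finset.sum_mul, ← Finset.sum_sub_distrib]
    exact Finset.sum_congr rfl fun j _ => by ring
  have h2 : ∑ j ∈ nbrs M.I k, (M.I j k * M.s t j) * (M.B t j - c)
      = (∑ j ∈ nbrs M.I k, (M.I j k * M.s t j) * M.B t j) - Wt M t k * c := by
    rw [Wt, Finset.sum_mul, ← Finset.sum_sub_distrib]
    exact Finset.sum_congr rfl fun j _ => by ring
  rw [h1, h2]
  ring

lemma minOp_le {hn : 0 < n} (b : Fin n → ℝ) (k : Fin n) : minOp hn b ≤ b k :=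
  Finset.inf'_le _ (Finset.mem_univ k)

lemma le_maxOp {hn : 0 < n} (b : Fin n → ℝ) (k : Fin n) : b k ≤ maxOp hn b :=
  Finset.le_sup' _ (Finset.mem_univ k)

lemma step_min (hn : 0 < n) (t : ℕ) (k : Fin n) :
    minOp hn (M.B t) ≤ M.B (t+1) k := by
  have h := expand M t k (minOp hn (M.B t))
  have h1 : 0 ≤ (1 - Wt M t k) * (M.B t k - minOp hn (M.B t)) :=
    mul_nonneg (by linarith [Wt_le_one M t k]) (by linarith [minOp_le (hn := hn) (M.B t) k])
  have h2 : 0 ≤ ∑ j ∈ nbrs M.I k, (M.I j k * M.s t j) * (M.B t j - minOp hn (M.B t)) :=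
    Finset.sum_nonneg fun j _ => mul_nonneg (term_nonneg M t j k)
      (by linarith [minOp_le (hn := hn) (M.B t) j])
  linarith

lemma step_max (hn : 0 < n) (t : ℕ) (k : Fin n) :
    M.B (t+1) k ≤ maxOp hn (M.B t) := by
  have h := expand M t k (maxOp hn (M.B t))
  have h1 : (1 - Wt M t k) * (M.B t k - maxOp hn (M.B t)) ≤ 0 :=
    mul_nonpos_of_nonneg_of_nonpos (by linarith [Wt_le_one M t k])
      (by linarith [le_maxOp (hn := hn) (M.B t) k])
  have h2 : ∑ j ∈ nbrs M.I k, (M.I j k * M.s t j) * (M.B t j - maxOp hn (M.B t)) ≤ 0 :=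
    Finset.sum_nonpos fun j _ => mul_nonpos_of_nonneg_of_nonpos (term_nonneg M t j k)
      (by linarith [le_maxOp (hn := hn) (M.B t) j])
  linarith

lemma min_mono (hn : 0 < n) : Monotone (fun t => minOp hn (M.B t)) :=
  monotone_nat_of_le_succ fun t =>
    Finset.le_inf' _ _ fun k _ => step_min M hn t k

lemma max_anti (hn : 0 < n) : Antitone (fun t => maxOp hn (M.B t)) :=
  antitone_nat_of_succ_le fun t =>
    Finset.sup'_le _ _ fun k _ => step_max M hn t k

end Aux
set_option maxHeartbeats 1000000 in
/-- The linear-programming certificate for the hard case. -/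
lemma lp_cert (Imin w w0 α γi a0 γ0 m Mx v u ξ : ℝ)
    (hI0 : 0 ≤ Imin) (hα : Imin ≤ α) (hγi : Imin ≤ γi) (ha0 : Imin ≤ a0) (hγ0 : Imin ≤ γ0)
    (hw1 : w ≤ 1) (hw2 : α + γi ≤ w) (hw0' : 0 ≤ w0) (hw01 : w0 ≤ 1)
    (hmv : m ≤ v) (hvMx : v ≤ Mx) (hmu : m ≤ u) (huMx : u ≤ Mx)
    (hmξ : m ≤ ξ) (hξMx : ξ ≤ Mx) :
    (1 - w0) * (u - Mx) + a0 * (v - Mx) + γ0 * (ξ - Mx)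
      - (1 - w) * (v - m) - α * (u - m) - γi * (ξ - m)
      + Imin * (w * (v - m) - α * (u - m) - γi * (ξ - m)) ≤ 0 := by
  have hα0 : (0:ℝ) ≤ α := le_trans hI0 hα
  have hγi0 : (0:ℝ) ≤ γi := le_trans hI0 hγi
  have ha00 : (0:ℝ) ≤ a0 := le_trans hI0 ha0
  have hγ00 : (0:ℝ) ≤ γ0 := le_trans hI0 hγ0
  have hx : (0:ℝ) ≤ v - m := by linarith
  have hy : (0:ℝ) ≤ Mx - v := by linarith
  have f1 : (0:ℝ) ≤ (v - m) * ((1 - w) * (1 + Imin)) :=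
    mul_nonneg hx (mul_nonneg (by linarith) (by linarith))
  rcases le_or_gt (1 - w0 - α - Imin * α) 0 with hp | hp <;>
    rcases le_or_gt (γ0 - γi - Imin * γi) 0 with hq | hq
  · linarith [mul_nonpos_of_nonneg_of_nonpos (by linarith : (0:ℝ) ≤ u - m) hp,
      mul_nonpos_of_nonneg_of_nonpos (by linarith : (0:ℝ) ≤ ξ - m) hq,
      mul_nonneg hx (by linarith : (0:ℝ) ≤ γ0 - Imin),
      mul_nonneg hx (by linarith : (0:ℝ) ≤ 1 - w0),
      mul_nonneg hy (by linarith : (0:ℝ) ≤ 1 - w0),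
      mul_nonneg hy ha00, mul_nonneg hy hγ00]
  · linarith [mul_nonpos_of_nonneg_of_nonpos (by linarith : (0:ℝ) ≤ u - m) hp,
      mul_le_mul_of_nonneg_right (by linarith : ξ - m ≤ Mx - m) (le_of_lt hq),
      mul_nonneg hx (mul_nonneg (by linarith : (0:ℝ) ≤ γi - Imin)
        (by linarith : (0:ℝ) ≤ 1 + Imin)),
      mul_nonneg hx (mul_nonneg hI0 hI0),
      mul_nonneg hx (by linarith : (0:ℝ) ≤ 1 - w0),
      mul_nonneg hy (by linarith : (0:ℝ) ≤ 1 - w0),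
      mul_nonneg hy ha00, mul_nonneg hy hγi0, mul_nonneg hy (mul_nonneg hγi0 hI0)]
  · linarith [mul_le_mul_of_nonneg_right (by linarith : u - m ≤ Mx - m) (le_of_lt hp),
      mul_nonpos_of_nonneg_of_nonpos (by linarith : (0:ℝ) ≤ ξ - m) hq,
      mul_nonneg hx (mul_nonneg (by linarith : (0:ℝ) ≤ α - Imin)
        (by linarith : (0:ℝ) ≤ 1 + Imin)),
      mul_nonneg hx (mul_nonneg hI0 hI0),
      mul_nonneg hx hγ00,
      mul_nonneg hy ha00, mul_nonneg hy hγ00, mul_nonneg hy hα0,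
      mul_nonneg hy (mul_nonneg hα0 hI0)]
  · linarith [mul_le_mul_of_nonneg_right (by linarith : u - m ≤ Mx - m) (le_of_lt hp),
      mul_le_mul_of_nonneg_right (by linarith : ξ - m ≤ Mx - m) (le_of_lt hq),
      mul_nonneg hx (mul_nonneg (by linarith : (0:ℝ) ≤ α - Imin)
        (by linarith : (0:ℝ) ≤ 1 + Imin)),
      mul_nonneg hx (mul_nonneg (by linarith : (0:ℝ) ≤ γi - Imin)
        (by linarith : (0:ℝ) ≤ 1 + Imin)),
      mul_nonneg hx hI0, mul_nonneg hx (mul_nonneg hI0 hI0),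
      mul_nonneg hy ha00, mul_nonneg hy hα0, mul_nonneg hy (mul_nonneg hα0 hI0),
      mul_nonneg hy hγi0, mul_nonneg hy (mul_nonneg hγi0 hI0)]

set_option maxHeartbeats 1000000 in
/-- In any SOM⁻ model on a clique with `n ≥ 3` agents, if at time `t`
some non-silent agent has opinion at least `U`, then the spread `R` decreases by at
least `I_min · (U − L)` from `t` to `t+1`. -/
theorem stmt_8 {n : ℕ} (hn : 0 < n) (hn3 : 3 ≤ n) (M : SOMminus n)
    (hclique : IsClique M.I) (U L Imin : ℝ)
    (hU : Tendsto (fun t => maxOp hn (M.B t)) atTop (𝓝 U))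
    (hL : Tendsto (fun t => minOp hn (M.B t)) atTop (𝓝 L))
    (hImin : IsLeast {x : ℝ | ∃ i j : Fin n, M.I i j ≠ 0 ∧ M.I i j = x} Imin)
    (t : ℕ) (i : Fin n) (hs : M.s t i = 1) (hB : U ≤ M.B t i) :
    maxOp hn (M.B (t+1)) - minOp hn (M.B (t+1)) ≤
      (maxOp hn (M.B t) - minOp hn (M.B t)) - Imin * (U - L) := by
  have hI0 : 0 ≤ Imin := by
    obtain ⟨a, b, -, hab⟩ := hImin.1
    exact hab ▸ M.I_nonneg a b
  have hIminle : ∀ j k : Fin n, j ≠ k → Imin ≤ M.I j k := fun j k h =>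
    hImin.2 ⟨j, k, hclique j k h, rfl⟩
  have hmem : ∀ j k : Fin n, j ≠ k → j ∈ nbrs M.I k := fun j k h => by
    simp [nbrs, h, hclique j k h]
  have hmL : minOp hn (M.B t) ≤ L := (min_mono M hn).ge_of_tendsto hL t
  have hm'L : minOp hn (M.B (t+1)) ≤ L := (min_mono M hn).ge_of_tendsto hL (t+1)
  have hUM' : U ≤ maxOp hn (M.B (t+1)) := (max_anti M hn).le_of_tendsto hU (t+1)
  have hM'Mx : maxOp hn (M.B (t+1)) ≤ maxOp hn (M.B t) := max_anti M hn (Nat.le_succ t)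
  have hmm' : minOp hn (M.B t) ≤ minOp hn (M.B (t+1)) := min_mono M hn (Nat.le_succ t)
  set m := minOp hn (M.B t) with hmdef
  set Mx := maxOp hn (M.B t) with hMxdef
  set m' := minOp hn (M.B (t+1)) with hm'def
  set M' := maxOp hn (M.B (t+1)) with hM'def
  set v := M.B t i with hvdef
  have hmv : m ≤ v := minOp_le _ _
  have hvMx : v ≤ Mx := le_maxOp _ _
  obtain ⟨k1, -, hk1⟩ := Finset.exists_mem_eq_inf'
    (⟨⟨0, hn⟩, Finset.mem_univ _⟩ : (Finset.univ : Finset (Fin n)).Nonempty) (M.B (t+1))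
  have hk1' : m' = M.B (t+1) k1 := hk1
  by_cases hki : k1 = i
  · -- argmin is i
    obtain ⟨k0, -, hk0⟩ := Finset.exists_mem_eq_sup'
      (⟨⟨0, hn⟩, Finset.mem_univ _⟩ : (Finset.univ : Finset (Fin n)).Nonempty) (M.B (t+1))
    have hk0' : M' = M.B (t+1) k0 := hk0
    by_cases hk0i : k0 = i
    · -- max also at i: spread collapses
      have hMm : M' = m' := by rw [hk0', hk1', hk0i, hki]
      have hUL : Imin * (U - L) ≤ 0 :=
        mul_nonpos_of_nonneg_of_nonpos hI0 (by linarith [hUM', hm'L, hMm.le])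
      linarith
    · -- min at i, max at k0 ≠ i
      rw [hki] at hk1'
      have hex : ∃ c : Fin n, c ∉ ({i, k0} : Finset (Fin n)) := by
        by_contra h
        push_neg at h
        have h1 : (Finset.univ : Finset (Fin n)).card ≤ ({i, k0} : Finset (Fin n)).card :=
          Finset.card_le_card fun x _ => h x
        have h2 : ({i, k0} : Finset (Fin n)).card ≤ 2 :=
          (Finset.card_insert_le _ _).trans (by simp)
        rw [Finset.card_univ, Fintype.card_fin] at h1
        omega
      obtain ⟨c, hc⟩ := hex
      simp only [Finset.mem_insert, Finset.mem_singleton, not_or] at hc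
      obtain ⟨hci, hck0⟩ := hc
      by_cases hsil : M.s t k0 = 1 ∧ M.s t c = 1
      · -- hard path: both k0 and c non-silent
        obtain ⟨hs0, hsc⟩ := hsil
        have hik0 : i ∈ nbrs M.I k0 := hmem i k0 (Ne.symm hk0i)
        have hck0mem : c ∈ nbrs M.I k0 := hmem c k0 hck0
        have hk0imem : k0 ∈ nbrs M.I i := hmem k0 i hk0i
        have hcimem : c ∈ nbrs M.I i := hmem c i hci
        set u := M.B t k0 with hudef
        set ξ := M.B t c with hξdef
        have hmu : m ≤ u := minOp_le _ _
        have huMx : u ≤ Mx := le_maxOp _ _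
        have hmξ : m ≤ ξ := minOp_le _ _
        have hξMx : ξ ≤ Mx := le_maxOp _ _
        set α := M.I k0 i with hαdef
        set γi := M.I c i with hγidef
        set a0 := M.I i k0 with ha0def
        set γ0 := M.I c k0 with hγ0def
        have hα : Imin ≤ α := hIminle k0 i hk0i
        have hγi : Imin ≤ γi := hIminle c i hci
        have ha0 : Imin ≤ a0 := hIminle i k0 (Ne.symm hk0i)
        have hγ0 : Imin ≤ γ0 := hIminle c k0 hck0
        set w := Wt M t i with hwdef
        set w0 := Wt M t k0 with hw0def
        have hw1 : w ≤ 1 := Wt_le_one M t i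
        have hw0' : 0 ≤ w0 := Wt_nonneg M t k0
        have hw01 : w0 ≤ 1 := Wt_le_one M t k0
        have hsubi : ({k0, c} : Finset (Fin n)) ⊆ nbrs M.I i := by
          intro x hx
          simp only [Finset.mem_insert, Finset.mem_singleton] at hx
          rcases hx with h | h
          · exact h ▸ hk0imem
          · exact h ▸ hcimem
        have hsubk0 : ({i, c} : Finset (Fin n)) ⊆ nbrs M.I k0 := by
          intro x hx
          simp only [Finset.mem_insert, Finset.mem_singleton] at hx
          rcases hx with h | h
          · exact h ▸ hik0
          · exact h ▸ hck0mem
        have hk0c : k0 ≠ c := Ne.symm hck0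
        have hic : i ≠ c := Ne.symm hci
        have h1 : m + (1 - w) * (v - m) + α * (u - m) + γi * (ξ - m) ≤ m' := by
          have hexp := expand M t i m
          have hmono := Finset.sum_le_sum_of_subset_of_nonneg
            (f := fun j => (M.I j i * M.s t j) * (M.B t j - m)) hsubi
            (fun j _ _ => mul_nonneg (term_nonneg M t j i)
              (by linarith [minOp_le (hn := hn) (M.B t) j]))
          rw [Finset.sum_pair hk0c, hs0, hsc, mul_one, mul_one] at hmono
          linarith [hexp, hk1'.ge]
        have h2 : M' ≤ Mx + (1 - w0) * (u - Mx) + a0 * (v - Mx) + γ0 * (ξ - Mx) := by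
          have hexp := expand M t k0 Mx
          have hmono := Finset.sum_le_sum_of_subset_of_nonneg
            (f := fun j => -((M.I j k0 * M.s t j) * (M.B t j - Mx))) hsubk0
            (fun j _ _ => neg_nonneg.2 (mul_nonpos_of_nonneg_of_nonpos (term_nonneg M t j k0)
              (by linarith [le_maxOp (hn := hn) (M.B t) j])))
          rw [Finset.sum_pair hic, Finset.sum_neg_distrib] at hmono
          rw [hs, hsc, mul_one, mul_one] at hmono
          linarith [hexp, hk0'.le]
        have hw2 : α + γi ≤ w := by
          have hmono := Finset.sum_le_sum_of_subset_of_nonneg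
            (f := fun j => M.I j i * M.s t j) hsubi
            (fun j _ _ => term_nonneg M t j i)
          rw [Finset.sum_pair hk0c, hs0, hsc, mul_one, mul_one] at hmono
          exact hmono
        have hvm' : v - m' ≤ w * (v - m) - α * (u - m) - γi * (ξ - m) := by linarith
        have hkey : Imin * (U - L) ≤ Imin * (w * (v - m) - α * (u - m) - γi * (ξ - m)) :=
          mul_le_mul_of_nonneg_left (by linarith) hI0
        have hα0 : (0:ℝ) ≤ α := le_trans hI0 hα
        have hγi0 : (0:ℝ) ≤ γi := le_trans hI0 hγi
        have ha00 : (0:ℝ) ≤ a0 := le_trans hI0 ha0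
        have hγ00 : (0:ℝ) ≤ γ0 := le_trans hI0 hγ0
        have hP : (1 - w0) * (u - Mx) + a0 * (v - Mx) + γ0 * (ξ - Mx)
            - (1 - w) * (v - m) - α * (u - m) - γi * (ξ - m)
            + Imin * (w * (v - m) - α * (u - m) - γi * (ξ - m)) ≤ 0 :=
          lp_cert Imin w w0 α γi a0 γ0 m Mx v u ξ hI0 hα hγi ha0 hγ0 hw1 hw2 hw0' hw01 hmv hvMx hmu huMx hmξ hξMx
        linarith
      · -- easy path: some relevant agent silent, so w has slack Imin
        have hd : ∃ d : Fin n, d ≠ i ∧ M.s t d = 0 := by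
          rcases M.s_bool t k0 with h0 | h0
          · exact ⟨k0, hk0i, h0⟩
          · rcases M.s_bool t c with h1 | h1
            · exact ⟨c, hci, h1⟩
            · exact absurd ⟨h0, h1⟩ hsil
        obtain ⟨d, hdi, hd0⟩ := hd
        have hdmem : d ∈ nbrs M.I i := hmem d i hdi
        have hW : Wt M t i ≤ 1 - Imin := by
          have e1 : (∑ j ∈ (nbrs M.I i).erase d, M.I j i * M.s t j) + M.I d i * M.s t d
              = Wt M t i := Finset.sum_erase_add _ _ hdmem
          have e2 : (∑ j ∈ (nbrs M.I i).erase d, M.I j i) + M.I d i = 1 - M.I i i := by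
            rw [Finset.sum_erase_add _ _ hdmem, sum_nbrs]
          have e3 : ∑ j ∈ (nbrs M.I i).erase d, M.I j i * M.s t j
              ≤ ∑ j ∈ (nbrs M.I i).erase d, M.I j i :=
            Finset.sum_le_sum fun j _ => by
              nlinarith [M.I_nonneg j i, s_le_one M t j, s_nonneg M t j]
          have h4 := hIminle d i hdi
          have h5 := M.I_nonneg i i
          rw [hd0, mul_zero, add_zero] at e1
          linarith
        have hlow : m + Imin * (v - m) ≤ m' := by
          have hexp := expand M t i m
          have hsum : 0 ≤ ∑ j ∈ nbrs M.I i, (M.I j i * M.s t j) * (M.B t j - m) :=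
            Finset.sum_nonneg fun j _ => mul_nonneg (term_nonneg M t j i)
              (by linarith [minOp_le (hn := hn) (M.B t) j])
          have h5 : Imin * (v - m) ≤ (1 - Wt M t i) * (v - m) :=
            mul_le_mul_of_nonneg_right (by linarith) (by linarith)
          linarith [hexp, hk1'.ge]
        have h2 : Imin * (U - L) ≤ Imin * (v - m) :=
          mul_le_mul_of_nonneg_left (by linarith) hI0
        linarith
  · -- case 1 : argmin distinct from i
    have hik1 : i ∈ nbrs M.I k1 := hmem i k1 (Ne.symm hki)
    have hlow : m + M.I i k1 * (v - m) ≤ m' := by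
      have hexp := expand M t k1 m
      have hsingle : (M.I i k1 * M.s t i) * (M.B t i - m) ≤
          ∑ j ∈ nbrs M.I k1, (M.I j k1 * M.s t j) * (M.B t j - m) :=
        Finset.single_le_sum (f := fun j => (M.I j k1 * M.s t j) * (M.B t j - m)) (fun j _ => mul_nonneg (term_nonneg M t j k1)
          (by linarith [minOp_le (hn := hn) (M.B t) j])) hik1
      have hself : 0 ≤ (1 - Wt M t k1) * (M.B t k1 - m) :=
        mul_nonneg (by linarith [Wt_le_one M t k1]) (by linarith [minOp_le (hn := hn) (M.B t) k1])
      rw [hs, mul_one] at hsingle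
      linarith [hexp, hk1'.ge]
    have h2 : Imin * (U - L) ≤ Imin * (v - m) := mul_le_mul_of_nonneg_left (by linarith) hI0
    have h3 : Imin * (v - m) ≤ M.I i k1 * (v - m) :=
      mul_le_mul_of_nonneg_right (hIminle i k1 (Ne.symm hki)) (by linarith)
    linarith
end
end

section
/- In any memoryless silence opinion model (SOM^-) whose influence graph is a clique with n ≥ 3 agents, the agents converge to consensus: there exists v ∈ [0,1] such that for all i ∈ A, lim_{t→∞} B_i^t = v. -/
open Finset Filter Topology

noncomputable section

/-! Write the update as `B (t+1) = P t *ᵥ B t`; every `P t` is row-stochastic, so the maximal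
opinion never increases and the minimal one never decreases. Let `α > 0` bound the
off-diagonal weights of the clique. When some agent speaks at time `t`, any two rows of `P t`
put weight `≥ α` on a common column, which shrinks the spread `max - min` by the factor
`1 - α`. When nobody speaks at time `t`, everybody speaks at time `t + 1`. Hence the spread
contracts by `1 - α` every two steps, and the nested intervals `[min, max]` shrink to a point. -/

section Averaging

variable {ι : Type*} [Fintype ι]

lemma sum_mul_eq_add_sum_sub_single [DecidableEq ι] (p b : ι → ℝ) (β : ℝ) (k : ι) :
    ∑ l, p l * b l = β * b k + ∑ l, (p l - if l = k then β else 0) * b l := by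
  simp only [sub_mul, ite_mul, zero_mul, sum_sub_distrib, sum_ite_eq', mem_univ, if_true]
  ring

lemma sum_sub_single [DecidableEq ι] (p : ι → ℝ) (β : ℝ) (k : ι) :
    ∑ l, (p l - if l = k then β else 0) = ∑ l, p l - β := by
  simp [sum_sub_distrib]

variable [Nonempty ι]

def spread (b : ι → ℝ) : ℝ :=
  univ.sup' univ_nonempty b - univ.inf' univ_nonempty b

lemma sum_mul_le_sum_mul_sup' {r : ι → ℝ} (hr : ∀ k, 0 ≤ r k) (b : ι → ℝ) :
    ∑ k, r k * b k ≤ (∑ k, r k) * univ.sup' univ_nonempty b := by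
  rw [sum_mul]
  exact sum_le_sum fun k _ => mul_le_mul_of_nonneg_left (le_sup' b (mem_univ k)) (hr k)

lemma sum_mul_inf'_le_sum_mul {r : ι → ℝ} (hr : ∀ k, 0 ≤ r k) (b : ι → ℝ) :
    (∑ k, r k) * univ.inf' univ_nonempty b ≤ ∑ k, r k * b k := by
  rw [sum_mul]
  exact sum_le_sum fun k _ => mul_le_mul_of_nonneg_left (inf'_le b (mem_univ k)) (hr k)

namespace Matrix

variable [DecidableEq ι] {P : Matrix ι ι ℝ}

lemma mulVec_apply_le_sup' (hP : P ∈ rowStochastic ℝ ι) (b : ι → ℝ) (i : ι) :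
    (P *ᵥ b) i ≤ univ.sup' univ_nonempty b := by
  have h := sum_mul_le_sum_mul_sup' (fun k => nonneg_of_mem_rowStochastic hP (i := i) (j := k)) b
  rwa [sum_row_of_mem_rowStochastic hP, one_mul] at h

lemma inf'_le_mulVec_apply (hP : P ∈ rowStochastic ℝ ι) (b : ι → ℝ) (i : ι) :
    univ.inf' univ_nonempty b ≤ (P *ᵥ b) i := by
  have h := sum_mul_inf'_le_sum_mul (fun k => nonneg_of_mem_rowStochastic hP (i := i) (j := k)) b
  rwa [sum_row_of_mem_rowStochastic hP, one_mul] at h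

/-- Two rows putting weight at least `β` on a common column `k` both contain the term `β • b k`;
only the remaining mass `1 - β` can spread their averages apart. -/
lemma mulVec_apply_sub_mulVec_apply_le (hP : P ∈ rowStochastic ℝ ι) (b : ι → ℝ) {β : ℝ}
    {i i' k : ι} (hi : β ≤ P i k) (hi' : β ≤ P i' k) :
    (P *ᵥ b) i - (P *ᵥ b) i' ≤ (1 - β) * spread b := by
  have hr : ∀ j, β ≤ P j k → ∀ l, 0 ≤ P j l - if l = k then β else 0 := by
    intro j hj l
    split_ifs with hl
    · subst hl; linarith
    · simpa using nonneg_of_mem_rowStochastic hP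
  have hmass : ∀ j, ∑ l, (P j l - if l = k then β else 0) = 1 - β := fun j => by
    rw [sum_sub_single, sum_row_of_mem_rowStochastic hP]
  have hupper := sum_mul_le_sum_mul_sup' (hr i hi) b
  have hlower := sum_mul_inf'_le_sum_mul (hr i' hi') b
  rw [hmass] at hupper hlower
  simp only [mulVec, dotProduct, spread]
  rw [sum_mul_eq_add_sum_sub_single (P i) b β k, sum_mul_eq_add_sum_sub_single (P i') b β k]
  linarith

lemma spread_mulVec_le (hP : P ∈ rowStochastic ℝ ι) (b : ι → ℝ) {β : ℝ}
    (hβ : ∀ i i', ∃ k, β ≤ P i k ∧ β ≤ P i' k) :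
    spread (P *ᵥ b) ≤ (1 - β) * spread b := by
  obtain ⟨i, -, hi⟩ := exists_mem_eq_sup' univ_nonempty (P *ᵥ b)
  obtain ⟨i', -, hi'⟩ := exists_mem_eq_inf' univ_nonempty (P *ᵥ b)
  obtain ⟨k, hk, hk'⟩ := hβ i i'
  rw [spread, hi, hi']
  exact mulVec_apply_sub_mulVec_apply_le hP b hk hk'

lemma spread_mulVec_le_spread (hP : P ∈ rowStochastic ℝ ι) (b : ι → ℝ) :
    spread (P *ᵥ b) ≤ spread b := by
  simpa using spread_mulVec_le hP b (β := 0)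
    fun i _ => ⟨i, nonneg_of_mem_rowStochastic hP, nonneg_of_mem_rowStochastic hP⟩

end Matrix

end Averaging

lemma tendsto_zero_of_antitone_of_add_le_mul {u : ℕ → ℝ} (hu : Antitone u)
    (hu0 : ∀ t, 0 ≤ u t) {m : ℕ} (hm : m ≠ 0) {c : ℝ} (hc0 : 0 ≤ c) (hc1 : c < 1)
    (hstep : ∀ t, u (t + m) ≤ c * u t) : Tendsto u atTop (𝓝 0) := by
  have hgeom : ∀ k, u (m * k) ≤ c ^ k * u 0 := by
    intro k
    induction k with
    | zero => simp
    | succ k ih => calc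
        u (m * (k + 1)) = u (m * k + m) := by rw [mul_add, mul_one]
        _ ≤ c * u (m * k) := hstep _
        _ ≤ c * (c ^ k * u 0) := mul_le_mul_of_nonneg_left ih hc0
        _ = c ^ (k + 1) * u 0 := by ring
  refine squeeze_zero hu0 (fun t => (hu (Nat.mul_div_le t m)).trans (hgeom (t / m))) ?_
  simpa using ((tendsto_pow_atTop_nhds_zero_of_lt_one hc0 hc1).comp
    (Nat.tendsto_div_const_atTop hm)).mul_const (u 0)

lemma exists_tendsto_of_monotone_of_antitone {lo hi : ℕ → ℝ} (hlo : Monotone lo)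
    (hhi : Antitone hi) (hle : ∀ t, lo t ≤ hi t) (hgap : Tendsto (hi - lo) atTop (𝓝 0)) :
    ∃ v ∈ Set.Icc (lo 0) (hi 0), ∀ x : ℕ → ℝ, (∀ t, lo t ≤ x t ∧ x t ≤ hi t) →
      Tendsto x atTop (𝓝 v) := by
  have hbdd : BddBelow (Set.range hi) := by
    refine ⟨lo 0, ?_⟩
    rintro _ ⟨t, rfl⟩
    exact (hlo (Nat.zero_le t)).trans (hle t)
  have hhi_lim := tendsto_atTop_ciInf hhi hbdd
  have hlo_lim : Tendsto lo atTop (𝓝 (⨅ t, hi t)) := by simpa using hhi_lim.sub hgap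
  exact ⟨⨅ t, hi t, ⟨hlo.ge_of_tendsto hlo_lim 0, ciInf_le hbdd 0⟩, fun x hx =>
    tendsto_of_tendsto_of_tendsto_of_le_of_le hlo_lim hhi_lim (fun t => (hx t).1)
      fun t => (hx t).2⟩

section Consensus

variable {ι : Type*} [Fintype ι] [DecidableEq ι] [Nonempty ι]

open Matrix in
theorem exists_tendsto_of_spread_add_le_mul {b : ℕ → ι → ℝ} {P : ℕ → Matrix ι ι ℝ}
    (hP : ∀ t, P t ∈ rowStochastic ℝ ι) (hb : ∀ t, b (t + 1) = P t *ᵥ b t)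
    {m : ℕ} (hm : m ≠ 0) {c : ℝ} (hc0 : 0 ≤ c) (hc1 : c < 1)
    (hcontr : ∀ t, spread (b (t + m)) ≤ c * spread (b t)) :
    ∃ v ∈ Set.Icc (univ.inf' univ_nonempty (b 0)) (univ.sup' univ_nonempty (b 0)),
      ∀ i, Tendsto (fun t => b t i) atTop (𝓝 v) := by
  set lo := fun t => univ.inf' univ_nonempty (b t)
  set hi := fun t => univ.sup' univ_nonempty (b t)
  have hlo : Monotone lo := monotone_nat_of_le_succ fun t =>
    le_inf' _ _ fun i _ => by rw [hb]; exact inf'_le_mulVec_apply (hP t) _ i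
  have hhi : Antitone hi := antitone_nat_of_succ_le fun t =>
    sup'_le _ _ fun i _ => by rw [hb]; exact mulVec_apply_le_sup' (hP t) _ i
  have hbetween : ∀ i t, lo t ≤ b t i ∧ b t i ≤ hi t := fun i t =>
    ⟨inf'_le _ (mem_univ i), le_sup' _ (mem_univ i)⟩
  have hle : ∀ t, lo t ≤ hi t := fun t =>
    (hbetween (Classical.arbitrary ι) t).1.trans (hbetween (Classical.arbitrary ι) t).2
  have hgap : Tendsto (hi - lo) atTop (𝓝 0) :=
    tendsto_zero_of_antitone_of_add_le_mul (fun _ _ h => sub_le_sub (hhi h) (hlo h))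
      (fun t => sub_nonneg.2 (hle t)) hm hc0 hc1 hcontr
  obtain ⟨v, hv, hx⟩ := exists_tendsto_of_monotone_of_antitone hlo hhi hle hgap
  exact ⟨v, hv, fun i => hx _ (hbetween i)⟩

end Consensus

namespace SOMminus

open Matrix

variable {n : ℕ} (M : SOMminus n)

lemma s_nonneg (t : ℕ) (j : Fin n) : 0 ≤ M.s t j := by
  rcases M.s_bool t j with h | h <;> simp [h]

lemma s_le_one (t : ℕ) (j : Fin n) : M.s t j ≤ 1 := by
  rcases M.s_bool t j with h | h <;> simp [h]

lemma sum_nbrs_eq_sum_erase (i : Fin n) (g : Fin n → ℝ) :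
    ∑ j ∈ nbrs M.I i, M.I j i * g j = ∑ j ∈ univ.erase i, M.I j i * g j := by
  refine sum_subset (fun j hj => ?_) fun j hj hj' => ?_
  · simp only [nbrs, mem_filter, mem_univ, true_and] at hj
    exact mem_erase.2 ⟨hj.1, mem_univ j⟩
  · have hI : M.I j i = 0 := by simpa [nbrs, (mem_erase.1 hj).1] using hj'
    rw [hI, zero_mul]

lemma sum_erase_I (i : Fin n) : ∑ j ∈ univ.erase i, M.I j i = 1 - M.I i i := by
  have hsum := M.sum_one i
  rw [sum_insert (by simp [nbrs])] at hsum
  have hnbrs := M.sum_nbrs_eq_sum_erase i 1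
  simp only [Pi.one_apply, mul_one] at hnbrs
  linarith

lemma sum_erase_I_mul_s_le (t : ℕ) (i : Fin n) :
    ∑ j ∈ univ.erase i, M.I j i * M.s t j ≤ 1 - M.I i i :=
  (sum_le_sum fun j _ => mul_le_of_le_one_right (M.I_nonneg j i) (M.s_le_one t j)).trans
    (M.sum_erase_I i).le

def updateMatrix (t : ℕ) : Matrix (Fin n) (Fin n) ℝ :=
  Matrix.of fun i k =>
    if k = i then 1 - ∑ j ∈ univ.erase i, M.I j i * M.s t j else M.I k i * M.s t k

lemma updateMatrix_apply_self (t : ℕ) (i : Fin n) :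
    M.updateMatrix t i i = 1 - ∑ j ∈ univ.erase i, M.I j i * M.s t j := by
  simp [updateMatrix]

lemma updateMatrix_apply_of_ne (t : ℕ) {i k : Fin n} (h : k ≠ i) :
    M.updateMatrix t i k = M.I k i * M.s t k := by
  simp [updateMatrix, h]

lemma updateMatrix_mem_rowStochastic (t : ℕ) :
    M.updateMatrix t ∈ rowStochastic ℝ (Fin n) := by
  rw [mem_rowStochastic_iff_sum]
  refine ⟨fun i k => ?_, fun i => ?_⟩
  · rcases eq_or_ne k i with rfl | h
    · rw [updateMatrix_apply_self]
      linarith [M.sum_erase_I_mul_s_le t k, M.I_nonneg k k]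
    · rw [M.updateMatrix_apply_of_ne t h]
      exact mul_nonneg (M.I_nonneg k i) (M.s_nonneg t k)
  · rw [← add_sum_erase _ _ (mem_univ i), updateMatrix_apply_self,
      sum_congr rfl fun k hk => M.updateMatrix_apply_of_ne t (ne_of_mem_erase hk)]
    ring

lemma B_succ (t : ℕ) : M.B (t + 1) = M.updateMatrix t *ᵥ M.B t := by
  ext i
  have hoff : ∑ k ∈ univ.erase i, M.updateMatrix t i k * M.B t k
      = ∑ k ∈ univ.erase i, M.I k i * (M.s t k * M.B t k) :=
    sum_congr rfl fun k hk => by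
      rw [M.updateMatrix_apply_of_ne t (ne_of_mem_erase hk), mul_assoc]
  rw [M.B_upd, mulVec, dotProduct, ← add_sum_erase _ _ (mem_univ i), updateMatrix_apply_self,
    hoff]
  simp_rw [mul_assoc (M.I _ i)]
  rw [M.sum_nbrs_eq_sum_erase]
  simp only [mul_sub, sum_sub_distrib, ← mul_assoc, ← sum_mul]
  ring

lemma le_updateMatrix_of_ne {α : ℝ} (hα : ∀ j i, j ≠ i → α ≤ M.I j i) {t : ℕ}
    {i k : Fin n} (hki : k ≠ i) (hk : M.s t k = 1) : α ≤ M.updateMatrix t i k := by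
  rw [M.updateMatrix_apply_of_ne t hki, hk, mul_one]
  exact hα k i hki

lemma I_le_updateMatrix_self {t : ℕ} {i d : Fin n} (hdi : d ≠ i) (hd : M.s t d = 0) :
    M.I d i ≤ M.updateMatrix t i i := by
  have hmem : d ∈ univ.erase i := mem_erase.2 ⟨hdi, mem_univ d⟩
  have hrest : ∑ j ∈ (univ.erase i).erase d, M.I j i * M.s t j
      ≤ ∑ j ∈ (univ.erase i).erase d, M.I j i :=
    sum_le_sum fun j _ => mul_le_of_le_one_right (M.I_nonneg j i) (M.s_le_one t j)
  have hcol := M.sum_erase_I i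
  rw [← add_sum_erase _ _ hmem] at hcol
  rw [updateMatrix_apply_self, ← add_sum_erase _ _ hmem, hd, mul_zero, zero_add]
  linarith [M.I_nonneg i i]

/-- If nobody outside `{i, i'}` speaks, a third agent `d` (this is where `n ≥ 3` enters) is
silent, so its weight stays on the diagonal, and the speaking agent `j` is a common column. -/
lemma exists_common_column (hn3 : 3 ≤ n) {α : ℝ} (hα : ∀ j i, j ≠ i → α ≤ M.I j i)
    {t : ℕ} {j : Fin n} (hj : M.s t j = 1) (i i' : Fin n) :
    ∃ k, α ≤ M.updateMatrix t i k ∧ α ≤ M.updateMatrix t i' k := by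
  by_cases h : ∃ d, d ≠ i ∧ d ≠ i' ∧ M.s t d = 1
  · obtain ⟨d, hdi, hdi', hd⟩ := h
    exact ⟨d, M.le_updateMatrix_of_ne hα hdi hd, M.le_updateMatrix_of_ne hα hdi' hd⟩
  · obtain ⟨d, hdi, hdi'⟩ : ∃ d, d ≠ i ∧ d ≠ i' := by
      obtain ⟨d, hd, hdi'⟩ := exists_mem_ne (s := univ.erase i)
        (by rw [card_erase_of_mem (mem_univ i), card_univ, Fintype.card_fin]; omega) i'
      exact ⟨d, ne_of_mem_erase hd, hdi'⟩
    have hd : M.s t d = 0 := (M.s_bool t d).resolve_right fun h1 => h ⟨d, hdi, hdi', h1⟩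
    have hcol : ∀ r, d ≠ r → α ≤ M.updateMatrix t r j := fun r hdr => by
      rcases eq_or_ne j r with rfl | hjr
      · exact (hα d j hdr).trans (M.I_le_updateMatrix_self hdr hd)
      · exact M.le_updateMatrix_of_ne hα hjr hj
    exact ⟨j, hcol i hdi, hcol i' hdi'⟩

lemma s_succ_eq_one_of_forall_silent {t : ℕ} (h : ∀ j, M.s t j ≠ 1) (i : Fin n) :
    M.s (t + 1) i = 1 := by
  rw [M.s_upd, filter_false_of_mem fun j _ => h j]
  simp

lemma exists_pos_le_I (hclique : IsClique M.I) :
    ∃ α, 0 < α ∧ α ≤ 1 ∧ ∀ j i, j ≠ i → α ≤ M.I j i := by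
  have hoff : ∀ᶠ α in 𝓝 (0 : ℝ), ∀ j i, j ≠ i → α ≤ M.I j i :=
    eventually_all.2 fun j => eventually_all.2 fun i => eventually_imp_distrib_left.2 fun h =>
      (eventually_lt_nhds ((M.I_nonneg j i).lt_of_ne (hclique j i h).symm)).mono fun _ => le_of_lt
  have hsmall : ∀ᶠ α in 𝓝[>] (0 : ℝ), α ≤ 1 ∧ ∀ j i, j ≠ i → α ≤ M.I j i :=
    nhdsWithin_le_nhds ((eventually_le_nhds one_pos).and hoff)
  obtain ⟨α, ⟨hα1, hα⟩, hα0⟩ := (hsmall.and self_mem_nhdsWithin).exists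
  exact ⟨α, hα0, hα1, hα⟩

variable [NeZero n]

lemma spread_B_add_two_le (hn3 : 3 ≤ n) {α : ℝ} (hα1 : α ≤ 1)
    (hα : ∀ j i, j ≠ i → α ≤ M.I j i) (t : ℕ) :
    spread (M.B (t + 2)) ≤ (1 - α) * spread (M.B t) := by
  have hcontract : ∀ t, (∃ j, M.s t j = 1) →
      spread (M.B (t + 1)) ≤ (1 - α) * spread (M.B t) := fun t ⟨j, hj⟩ => by
    rw [M.B_succ]
    exact spread_mulVec_le (M.updateMatrix_mem_rowStochastic t) _
      (M.exists_common_column hn3 hα hj)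
  have hmono : ∀ t, spread (M.B (t + 1)) ≤ spread (M.B t) := fun t => by
    rw [M.B_succ]
    exact spread_mulVec_le_spread (M.updateMatrix_mem_rowStochastic t) _
  by_cases h : ∃ j, M.s t j = 1
  · exact (hmono (t + 1)).trans (hcontract t h)
  · simp only [not_exists] at h
    calc spread (M.B (t + 2)) ≤ (1 - α) * spread (M.B (t + 1)) :=
          hcontract (t + 1) ⟨0, M.s_succ_eq_one_of_forall_silent h 0⟩
      _ ≤ (1 - α) * spread (M.B t) := mul_le_mul_of_nonneg_left (hmono t) (by linarith)

end SOMminus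

/-- In any SOM⁻ model whose influence graph is a clique with `n ≥ 3`
agents, the agents converge to consensus. -/
theorem stmt_10 {n : ℕ} (hn3 : 3 ≤ n) (M : SOMminus n) (hclique : IsClique M.I) :
    ∃ v ∈ Set.Icc (0:ℝ) 1, ∀ i : Fin n, Tendsto (fun t => M.B t i) atTop (𝓝 v) := by
  have : NeZero n := ⟨by omega⟩
  obtain ⟨α, hα0, hα1, hα⟩ := M.exists_pos_le_I hclique
  obtain ⟨v, ⟨hv0, hv1⟩, hv⟩ := exists_tendsto_of_spread_add_le_mul
    M.updateMatrix_mem_rowStochastic M.B_succ two_ne_zero (sub_nonneg.2 hα1)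
    (sub_lt_self 1 hα0) (M.spread_B_add_two_le hn3 hα1 hα)
  refine ⟨v, ⟨?_, ?_⟩, hv⟩
  · exact (le_inf' _ _ fun i _ => (M.B0_mem i).1).trans hv0
  · exact hv1.trans (sup'_le _ _ fun i _ => (M.B0_mem i).2)
end
end

section
/- Consensus is not guaranteed in SOM^- for 2-agent cliques: in the memoryless silence opinion model (SOM^-) on the 2-agent clique with agents 1 and 2, influences I(1,2) = I(2,1) = 1 (hence self-influence 0), tolerance radii τ_1 = τ_2 = 1, initial opinions B_1^0 = 1 and B_2^0 = 0, and initial silence state s^0 = (1,1), for every t ∈ ℕ both agents are non-silent and their opinions alternate: B_1^t = 1, B_2^t = 0 when t is even, and B_1^t = 0, B_2^t = 1 when t is odd; in particular, the agents do not converge to consensus. -/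
open Finset Filter Topology

noncomputable section

/-- Consensus is not guaranteed in SOM⁻ for 2-agent cliques: with
mutual influence 1 (so self-influence 0), tolerance radii 1, initial opinions
`(1,0)` and both agents initially non-silent, both agents are always non-silent,
opinions perpetually alternate between `(1,0)` and `(0,1)`, and the agents do not
converge to consensus. -/
theorem stmt_11 (M : SOMminus 2)
    (hI01 : M.I 0 1 = 1) (hI10 : M.I 1 0 = 1)
    (hI00 : M.I 0 0 = 0) (hI11 : M.I 1 1 = 0)
    (hτ : ∀ i, M.τ i = 1)
    (hB00 : M.B 0 0 = 1) (hB01 : M.B 0 1 = 0)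
    (hs0 : ∀ i, M.s 0 i = 1) :
    (∀ t : ℕ, ∀ i : Fin 2, M.s t i = 1) ∧
    (∀ t : ℕ, (Even t → M.B t 0 = 1 ∧ M.B t 1 = 0) ∧
              (¬ Even t → M.B t 0 = 0 ∧ M.B t 1 = 1)) ∧
    ¬ ∃ v ∈ Set.Icc (0:ℝ) 1, ∀ i : Fin 2, Tendsto (fun t => M.B t i) atTop (𝓝 v) := by
  have hn0 : nbrs M.I 0 = {1} := by
    ext j; fin_cases j <;> simp [nbrs, hI10, hI00]
  have hn1 : nbrs M.I 1 = {0} := by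
    ext j; fin_cases j <;> simp [nbrs, hI01, hI11]
  have key : ∀ t, (M.s t 0 = 1 ∧ M.s t 1 = 1) ∧
      ((Even t → M.B t 0 = 1 ∧ M.B t 1 = 0) ∧ (¬ Even t → M.B t 0 = 0 ∧ M.B t 1 = 1)) := by
    intro t
    induction t with
    | zero => exact ⟨⟨hs0 0, hs0 1⟩, fun _ => ⟨hB00, hB01⟩, fun h => absurd Even.zero h⟩
    | succ t ih =>
      obtain ⟨⟨hst0, hst1⟩, hBe, hBo⟩ := ih
      have hB0 : M.B (t+1) 0 = M.B t 1 := by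
        rw [M.B_upd t 0, hn0]; simp [hI10, hst1]
      have hB1 : M.B (t+1) 1 = M.B t 0 := by
        rw [M.B_upd t 1, hn1]; simp [hI01, hst0]
      have hdiff : |M.B t 0 - M.B t 1| ≤ 1 := by
        by_cases h : Even t
        · obtain ⟨a, b⟩ := hBe h; rw [a, b]; norm_num
        · obtain ⟨a, b⟩ := hBo h; rw [a, b]; norm_num
      have hdiff' : |M.B t 1 - M.B t 0| ≤ 1 := by rwa [abs_sub_comm]
      have hsn0 : M.s (t+1) 0 = 1 := by
        rw [M.s_upd t 0, hn0]
        have h1 : ({1} : Finset (Fin 2)).filter (fun j => M.s t j = 1) = {1} := by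
          rw [Finset.filter_singleton]; simp [hst1]
        rw [h1]
        have h2 : ({1} : Finset (Fin 2)).filter (fun j => |M.B t 0 - M.B t j| ≤ M.τ 0) = {1} := by
          rw [Finset.filter_singleton]; simp [hτ 0, hdiff]
        rw [h2]; simp
      have hsn1 : M.s (t+1) 1 = 1 := by
        rw [M.s_upd t 1, hn1]
        have h1 : ({0} : Finset (Fin 2)).filter (fun j => M.s t j = 1) = {0} := by
          rw [Finset.filter_singleton]; simp [hst0]
        rw [h1]
        have h2 : ({0} : Finset (Fin 2)).filter (fun j => |M.B t 1 - M.B t j| ≤ M.τ 1) = {0} := by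
          rw [Finset.filter_singleton]; simp [hτ 1, hdiff']
        rw [h2]; simp
      refine ⟨⟨hsn0, hsn1⟩, fun h => ?_, fun h => ?_⟩
      · have ht : ¬ Even t := Nat.even_add_one.mp h
        obtain ⟨a, b⟩ := hBo ht
        exact ⟨by rw [hB0, b], by rw [hB1, a]⟩
      · have ht : Even t := by by_contra h'; exact h (Nat.even_add_one.mpr h')
        obtain ⟨a, b⟩ := hBe ht
        exact ⟨by rw [hB0, b], by rw [hB1, a]⟩
  refine ⟨fun t i => ?_, fun t => (key t).2, ?_⟩
  · fin_cases i
    · exact (key t).1.1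
    · exact (key t).1.2
  · rintro ⟨v, -, hlim⟩
    have h0 := hlim 0
    have h2 : Tendsto (fun n : ℕ => 2 * n) atTop atTop :=
      tendsto_atTop_atTop_of_monotone (fun a b h => by omega) (fun b => ⟨b, by omega⟩)
    have h3 : Tendsto (fun n : ℕ => 2 * n + 1) atTop atTop :=
      tendsto_atTop_atTop_of_monotone (fun a b h => by omega) (fun b => ⟨b, by omega⟩)
    have hv1 : v = 1 := tendsto_nhds_unique
      ((h0.comp h2).congr (fun n => ((key (2 * n)).2.1 (even_two_mul n)).1))
      tendsto_const_nhds
    have hv0 : v = 0 := tendsto_nhds_unique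
      ((h0.comp h3).congr (fun n => ((key (2 * n + 1)).2.2 (by simp [Nat.even_add_one])).1))
      tendsto_const_nhds
    linarith
end
end

section
/- Unlike in the DeGroot model, consensus in SOM^- is not guaranteed for strongly connected aperiodic influence graphs: there exists a memoryless silence opinion model (SOM^-) whose influence graph is strongly connected and aperiodic, but whose agents do not converge to consensus (there is no v ∈ [0,1] with lim_{t→∞} B_i^t = v for all agents i). -/
open Finset Filter Topology

noncomputable section

/-- The influence graph is strongly connected: for every pair of distinct agents
there is a directed path (of edges in the support of `I`) from one to the other. -/
def StronglyConnected {n : ℕ} (I : Fin n → Fin n → ℝ) : Prop :=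
  ∀ i j : Fin n, i ≠ j → Relation.TransGen (fun a b => I a b ≠ 0) i j

/-- `m` is the length of a cycle of the influence graph: a closed path
`(c 0, c 1)(c 1, c 2)…(c (m-1), c m)` with `c m = c 0` and the intermediate
nodes `c 1, …, c (m-1)` all distinct. -/
def IsCycleLength {n : ℕ} (I : Fin n → Fin n → ℝ) (m : ℕ) : Prop :=
  0 < m ∧ ∃ c : ℕ → Fin n, c m = c 0 ∧
    (∀ k < m, I (c k) (c (k+1)) ≠ 0) ∧
    (∀ k l, 1 ≤ k → k < m → 1 ≤ l → l < m → c k = c l → k = l)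

/-- The influence graph is aperiodic: the greatest common divisor of the lengths of
its cycles is one, i.e. every common divisor of all cycle lengths equals 1. -/
def Aperiodic {n : ℕ} (I : Fin n → Fin n → ℝ) : Prop :=
  ∀ d : ℕ, (∀ m, IsCycleLength I m → d ∣ m) → d = 1

/-! Two pairs of agents, `{0, 1}` with opinion `0` and `{2, 3}` with opinion `1`, are joined only
through a bridge agent `4` with opinion `1/2` and tolerance `1/4`. The bridge disagrees with both
of its speaking neighbours, so it stays silent and the two pairs never hear each other; the pulls
of `0` and `2` on the bridge cancel, so its opinion stays at `1/2`. The whole configuration is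
therefore a fixed point of the dynamics, while the graph is strongly connected through the bridge
and aperiodic thanks to its self-loops. -/

theorem sum_insert_nbrs_eq_sum {n : ℕ} (I : Fin n → Fin n → ℝ) (i : Fin n) :
    ∑ j ∈ insert i (nbrs I i), I j i = ∑ j, I j i := by
  refine sum_subset (subset_univ _) fun j _ hj => ?_
  by_contra h
  exact hj (mem_insert.2 (or_iff_not_imp_left.2 fun hji => by simp [nbrs, hji, h]))

theorem sum_nbrs_mul_sub_eq_sum {n : ℕ} (I : Fin n → Fin n → ℝ) (w b : Fin n → ℝ) (i : Fin n) :
    ∑ j ∈ nbrs I i, I j i * w j * (b j - b i) = ∑ j, I j i * w j * (b j - b i) := by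
  refine sum_subset (subset_univ _) fun j _ hj => ?_
  by_cases hji : j = i
  · simp [hji]
  · have hI : I j i = 0 := by simpa [nbrs, hji] using hj
    simp [hI]

theorem half_card_add_one_le_card_filter {α : Type*} (N : Finset α) (p : α → Prop)
    [DecidablePred p] (h : ∀ j ∈ N, p j) : (#N + 1) / 2 ≤ #(N.filter p) := by
  rw [filter_true_of_mem h]
  omega

theorem card_filter_lt_half_card_add_one {α : Type*} {N : Finset α} (p : α → Prop)
    [DecidablePred p] (hN : N.Nonempty) (h : ∀ j ∈ N, ¬ p j) : #(N.filter p) < (#N + 1) / 2 := by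
  rw [filter_false_of_mem h, card_empty]
  have := hN.card_pos
  omega

theorem stronglyConnected_of_hub {n : ℕ} {I : Fin n → Fin n → ℝ} (r : Fin n)
    (h_to : ∀ i, Relation.ReflTransGen (fun a b => I a b ≠ 0) i r)
    (h_from : ∀ j, Relation.ReflTransGen (fun a b => I a b ≠ 0) r j) :
    StronglyConnected I := fun i j hij =>
  (Relation.reflTransGen_iff_eq_or_transGen.1 ((h_to i).trans (h_from j))).resolve_left
    (Ne.symm hij)

theorem isCycleLength_one {n : ℕ} {I : Fin n → Fin n → ℝ} {i : Fin n} (h : I i i ≠ 0) :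
    IsCycleLength I 1 :=
  ⟨one_pos, fun _ => i, rfl, fun _ _ => h, fun _ _ _ _ _ _ _ => by omega⟩

theorem aperiodic_of_self_loop {n : ℕ} {I : Fin n → Fin n → ℝ} {i : Fin n} (h : I i i ≠ 0) :
    Aperiodic I := fun _ hd => Nat.dvd_one.1 (hd 1 (isCycleLength_one h))

namespace Bridge

/-- `I j i` is the influence of agent `j` on agent `i`, so the columns sum to one. -/
def I : Fin 5 → Fin 5 → ℝ :=
  ![![1/3, 1/2, 0, 0, 1/3],
    ![1/3, 1/2, 0, 0, 0],
    ![0, 0, 1/3, 1/2, 1/3],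
    ![0, 0, 1/3, 1/2, 0],
    ![1/3, 0, 1/3, 0, 1/3]]

def opinion : Fin 5 → ℝ := ![0, 0, 1, 1, 1/2]

def speaks : Fin 5 → ℝ := ![1, 1, 1, 1, 0]

def τ : ℝ := 1/4

theorem I_mem_Icc (i j : Fin 5) : I i j ∈ Set.Icc (0 : ℝ) 1 := by
  fin_cases i <;> fin_cases j <;> simp [I] <;> norm_num

theorem sum_insert_nbrs (i : Fin 5) : ∑ j ∈ insert i (nbrs I i), I j i = 1 := by
  rw [sum_insert_nbrs_eq_sum, Fin.sum_univ_five]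
  fin_cases i <;> simp [I] <;> norm_num

theorem nbrs_four : nbrs I 4 = {0, 2} := by
  ext j; fin_cases j <;> simp [nbrs, I]

theorem speaks_eq_one_iff (i : Fin 5) : speaks i = 1 ↔ i ≠ 4 := by
  fin_cases i <;> simp [speaks]

theorem speaks_eq_zero_or_one (i : Fin 5) : speaks i = 0 ∨ speaks i = 1 := by
  fin_cases i <;> simp [speaks]

theorem opinion_eq_of_speaking_nbr {i j : Fin 5} (hi : i ≠ 4) (hj : j ∈ nbrs I i)
    (hs : speaks j = 1) : opinion j = opinion i := by
  fin_cases i <;> fin_cases j <;> simp [nbrs, I, speaks, opinion] at hi hj hs ⊢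

theorem opinion_stationary (i : Fin 5) :
    ∑ j ∈ nbrs I i, I j i * speaks j * (opinion j - opinion i) = 0 := by
  rw [sum_nbrs_mul_sub_eq_sum, Fin.sum_univ_five]
  fin_cases i <;> simp [I, speaks, opinion]
  norm_num

theorem speaks_stationary (i : Fin 5) : speaks i = 1 ↔
    (#((nbrs I i).filter (fun j => speaks j = 1)) + 1) / 2 ≤
      #(((nbrs I i).filter (fun j => speaks j = 1)).filter
        (fun j => |opinion i - opinion j| ≤ τ)) := by
  by_cases hi : i = 4
  · subst hi
    have h0 : 0 ∈ (nbrs I 4).filter (fun j => speaks j = 1) := by simp [nbrs_four, speaks]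
    refine iff_of_false (by simp [speaks]) (not_le.2 ?_)
    refine card_filter_lt_half_card_add_one _ ⟨0, h0⟩ fun j hj => ?_
    rw [mem_filter, nbrs_four, mem_insert, mem_singleton] at hj
    rcases hj.1 with rfl | rfl <;> simp [opinion, τ] <;> norm_num
  · refine iff_of_true ((speaks_eq_one_iff i).2 hi) (half_card_add_one_le_card_filter _ _ ?_)
    intro j hj
    rw [opinion_eq_of_speaking_nbr hi (mem_filter.1 hj).1 (mem_filter.1 hj).2]
    norm_num [τ]

def model : SOMminus 5 where
  I := I
  I_nonneg i j := (I_mem_Icc i j).1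
  I_le_one i j := (I_mem_Icc i j).2
  sum_one := sum_insert_nbrs
  τ _ := τ
  τ_mem _ := by norm_num [τ]
  B _ := opinion
  s _ := speaks
  B0_mem i := by fin_cases i <;> simp [opinion]; norm_num
  s_bool _ := speaks_eq_zero_or_one
  B_upd _ i := by simp only [opinion_stationary, add_zero]
  s_upd _ := speaks_stationary

theorem stronglyConnected : StronglyConnected I := by
  have e10 : I 1 0 ≠ 0 := by simp [I]
  have e40 : I 4 0 ≠ 0 := by simp [I]
  have e24 : I 2 4 ≠ 0 := by simp [I]
  have e32 : I 3 2 ≠ 0 := by simp [I]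
  have e01 : I 0 1 ≠ 0 := by simp [I]
  have e04 : I 0 4 ≠ 0 := by simp [I]
  have e42 : I 4 2 ≠ 0 := by simp [I]
  have e23 : I 2 3 ≠ 0 := by simp [I]
  refine stronglyConnected_of_hub 0 (fun i => ?_) (fun j => ?_)
  · fin_cases i
    exacts [.refl, .single e10, .head e24 (.single e40), .head e32 (.head e24 (.single e40)),
      .single e40]
  · fin_cases j
    exacts [.refl, .single e01, .tail (.single e04) e42, .tail (.tail (.single e04) e42) e23,
      .single e04]

end Bridge

/-- Consensus in SOM⁻ is not guaranteed for strongly connected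
aperiodic influence graphs: there is an SOM⁻ model whose influence graph is strongly
connected and aperiodic but whose agents do not converge to consensus. -/
theorem stmt_13 :
    ∃ (n : ℕ) (M : SOMminus n), StronglyConnected M.I ∧ Aperiodic M.I ∧
      ¬ ∃ v ∈ Set.Icc (0:ℝ) 1, ∀ i : Fin n, Tendsto (fun t => M.B t i) atTop (𝓝 v) := by
  refine ⟨5, Bridge.model, Bridge.stronglyConnected,
    aperiodic_of_self_loop (i := 0) (by simp [Bridge.model, Bridge.I]), ?_⟩
  rintro ⟨v, -, hv⟩
  have h0 : Bridge.opinion 0 = v := tendsto_const_nhds_iff.1 (hv 0)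
  have h2 : Bridge.opinion 2 = v := tendsto_const_nhds_iff.1 (hv 2)
  simp [Bridge.opinion, ← h0] at h2
end
end

section
/- Consensus in SOM^+ is not guaranteed even for clique influence graphs: there exists a memory-based silence opinion model (SOM^+) whose influence graph is a clique, but whose agents do not converge to consensus (there is no v ∈ [0,1] with lim_{t→∞} B_i^t = v for all agents i). -/
open Finset Filter Topology

noncomputable section

/-- A memory-based silence opinion model (SOM⁺) on `n` agents. `P t j` is the public
opinion of agent `j` at time `t`, i.e. `B u j` for the largest `u ≤ t` with `s u j = 1`. -/
structure SOMplus (n : ℕ) where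
  I : Fin n → Fin n → ℝ
  I_nonneg : ∀ i j, 0 ≤ I i j
  I_le_one : ∀ i j, I i j ≤ 1
  sum_one : ∀ i, ∑ j ∈ insert i (nbrs I i), I j i = 1
  τ : Fin n → ℝ
  τ_mem : ∀ i, τ i ∈ Set.Icc (0:ℝ) 1
  B : ℕ → Fin n → ℝ
  s : ℕ → Fin n → ℝ
  /-- public opinions -/
  P : ℕ → Fin n → ℝ
  B0_mem : ∀ i, B 0 i ∈ Set.Icc (0:ℝ) 1
  s_bool : ∀ t i, s t i = 0 ∨ s t i = 1
  /-- initially all agents are non-silent -/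
  s0 : ∀ i, s 0 i = 1
  /-- `P t j = B u j` where `u = max { u ≤ t | s u j = 1 }` -/
  P_spec : ∀ t j, ∃ u, u ≤ t ∧ s u j = 1 ∧ P t j = B u j ∧
    ∀ v, v ≤ t → s v j = 1 → v ≤ u
  /-- memory-based opinion update -/
  B_upd : ∀ t i, B (t+1) i =
    B t i + ∑ j ∈ nbrs I i, I j i * (P t j - B t i)
  /-- silence update: non-silent iff at least ⌈|N(i)|/2⌉ neighbors' public opinions are within tolerance -/
  s_upd : ∀ t i, (s (t+1) i = 1 ↔
    ((nbrs I i).card + 1) / 2 ≤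
      ((nbrs I i).filter (fun j => |B t i - P t j| ≤ τ i)).card)

/-!
Two agents influence each other with weight `1/2`, have tolerance `0`, and start at opinions
`0` and `1`. At time `0` each sees the other's opinion at positive distance, so both fall silent
and their public opinions stay frozen at `0` and `1` forever. Each agent then keeps moving halfway
towards the other's frozen opinion, so the opinions `1 - 2⁻ᵗ` and `2⁻ᵗ` swap places in the limit
instead of meeting.
-/

lemma nbrs_const {n : ℕ} {c : ℝ} (hc : c ≠ 0) (i : Fin n) :
    nbrs (fun _ _ => c) i = univ.erase i := by
  ext j
  simp [nbrs, hc]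

lemma nbrs_const_two {c : ℝ} (hc : c ≠ 0) (i : Fin 2) : nbrs (fun _ _ => c) i = {i.rev} := by
  rw [nbrs_const hc]
  fin_cases i <;> decide

def swapOpinion (t : ℕ) (i : Fin 2) : ℝ :=
  if i = 0 then 1 - (1 / 2) ^ t else (1 / 2) ^ t

lemma swapOpinion_succ (t : ℕ) (i : Fin 2) :
    swapOpinion (t + 1) i =
      swapOpinion t i + 1 / 2 * (swapOpinion 0 i.rev - swapOpinion t i) := by
  fin_cases i <;> simp [swapOpinion, pow_succ] <;> ring

lemma abs_swapOpinion_sub_rev (t : ℕ) (i : Fin 2) :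
    |swapOpinion t i - swapOpinion 0 i.rev| = (1 / 2) ^ t := by
  fin_cases i <;> simp [swapOpinion]

lemma tendsto_swapOpinion_zero : Tendsto (swapOpinion · 0) atTop (𝓝 1) := by
  simpa [swapOpinion] using
    tendsto_const_nhds.sub (tendsto_pow_atTop_nhds_zero_of_lt_one (r := (1 / 2 : ℝ))
      (by norm_num) (by norm_num))

lemma tendsto_swapOpinion_one : Tendsto (swapOpinion · 1) atTop (𝓝 0) := by
  simpa [swapOpinion] using
    tendsto_pow_atTop_nhds_zero_of_lt_one (r := (1 / 2 : ℝ)) (by norm_num) (by norm_num)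

def swapModel : SOMplus 2 where
  I _ _ := 1 / 2
  I_nonneg _ _ := by norm_num
  I_le_one _ _ := by norm_num
  sum_one i := by
    rw [nbrs_const_two (by norm_num), sum_pair (by fin_cases i <;> decide)]
    norm_num
  τ _ := 0
  τ_mem _ := by simp
  B := swapOpinion
  s t _ := if t = 0 then 1 else 0
  P _ := swapOpinion 0
  B0_mem i := by fin_cases i <;> simp [swapOpinion]
  s_bool t _ := by split_ifs <;> simp
  s0 _ := rfl
  P_spec t _ := ⟨0, t.zero_le, rfl, rfl, fun v _ hv => by simpa using hv⟩
  B_upd t i := by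
    rw [nbrs_const_two (by norm_num), sum_singleton, swapOpinion_succ]
  s_upd t i := by
    have hsilent : ¬ |swapOpinion t i - swapOpinion 0 i.rev| ≤ 0 := by
      rw [abs_swapOpinion_sub_rev]
      exact not_le.mpr (by positivity)
    rw [nbrs_const_two (by norm_num), filter_singleton, if_neg hsilent]
    simp

/-- Consensus in SOM⁺ is not guaranteed even for cliques: there is an
SOM⁺ model whose influence graph is a clique but whose agents do not converge to
consensus. -/
theorem stmt_16 :
    ∃ (n : ℕ) (M : SOMplus n), IsClique M.I ∧
      ¬ ∃ v ∈ Set.Icc (0:ℝ) 1, ∀ i : Fin n, Tendsto (fun t => M.B t i) atTop (𝓝 v) := by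
  refine ⟨2, swapModel, fun _ _ _ => by norm_num [swapModel], ?_⟩
  rintro ⟨v, -, hv⟩
  have hv₁ : v = 1 := tendsto_nhds_unique (hv 0) tendsto_swapOpinion_zero
  have hv₀ : v = 0 := tendsto_nhds_unique (hv 1) tendsto_swapOpinion_one
  exact one_ne_zero (hv₁.symm.trans hv₀)
end
end
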